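/- The system ẋ1 = x2, ẋ2 = f + b·u, ẋ3 = x4, ẋ4 = (f+b·u)/k with k ≠ 0 cannot be asymptotically stabilized to the origin from any initial state with x1(0) − k·x3(0) ≠ 0: for every control function u, the solution satisfies ¬(x1(t) → 0 ∧ x3(t) → 0 as t → ∞). -/

import Mathlib

/-!
The forcing enters the two channels proportionally, so `x₂ - k x₄` has zero derivative and,
vanishing at `0`, stays zero; then `x₁ - k x₃` has derivative `x₂ - k x₄ = 0` and stays equal to
its nonzero initial value. If `x₁` and `x₃` both tended to `0`, so would `x₁ - k x₃`.
-/

open Filter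

lemma eq_of_deriv_eq_zero_of_nonneg {g : ℝ → ℝ} (hg : Differentiable ℝ g)
    (h : ∀ t, 0 ≤ t → deriv g t = 0) {t : ℝ} (ht : 0 ≤ t) : g t = g 0 :=
  constant_of_has_deriv_right_zero hg.continuous.continuousOn
    (fun s hs => by simpa [h s hs.1] using (hg s).hasDerivAt.hasDerivWithinAt) t ⟨ht, le_rfl⟩

lemma sub_const_mul_eq_of_deriv_eq_const_mul {g h : ℝ → ℝ} (k : ℝ)
    (hg : Differentiable ℝ g) (hh : Differentiable ℝ h)
    (hderiv : ∀ t, 0 ≤ t → deriv g t = k * deriv h t) {t : ℝ} (ht : 0 ≤ t) :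
    g t - k * h t = g 0 - k * h 0 := by
  refine eq_of_deriv_eq_zero_of_nonneg (g := fun s => g s - k * h s)
    (hg.sub (hh.const_mul k)) (fun s hs => ?_) ht
  have hsub : HasDerivAt (fun s => g s - k * h s) (deriv g s - k * deriv h s) s :=
    (hg s).hasDerivAt.sub ((hh s).hasDerivAt.const_mul k)
  rw [hsub.deriv, hderiv s hs, sub_self]

theorem stmt_2 (x1 x2 x3 x4 : ℝ → ℝ) (u f b : ℝ → ℝ) (k : ℝ) (hk : k ≠ 0)
    (hd1 : Differentiable ℝ x1) (hd2 : Differentiable ℝ x2)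
    (hd3 : Differentiable ℝ x3) (hd4 : Differentiable ℝ x4)
    (he1 : ∀ t : ℝ, 0 ≤ t → deriv x1 t = x2 t)
    (he2 : ∀ t : ℝ, 0 ≤ t → deriv x2 t = f t + b t * u t)
    (he3 : ∀ t : ℝ, 0 ≤ t → deriv x3 t = x4 t)
    (he4 : ∀ t : ℝ, 0 ≤ t → deriv x4 t = (f t + b t * u t) / k)
    (hi2 : x2 0 = k * x4 0) (hi1 : x1 0 - k * x3 0 ≠ 0) :
    ¬(Filter.Tendsto x1 Filter.atTop (nhds 0) ∧
      Filter.Tendsto x3 Filter.atTop (nhds 0)) := by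
  rintro ⟨h1, h3⟩
  have hvel : ∀ t, 0 ≤ t → x2 t = k * x4 t := fun t ht => by
    have := sub_const_mul_eq_of_deriv_eq_const_mul k hd2 hd4
      (fun s hs => by rw [he2 s hs, he4 s hs, mul_div_cancel₀ _ hk]) ht
    linarith
  have hpos : ∀ t, 0 ≤ t → x1 t - k * x3 t = x1 0 - k * x3 0 :=
    fun t ht => sub_const_mul_eq_of_deriv_eq_const_mul k hd1 hd3
      (fun s hs => by rw [he1 s hs, he3 s hs, hvel s hs]) ht
  have hlim : Tendsto (fun t => x1 t - k * x3 t) atTop (nhds 0) := by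
    simpa using h1.sub (h3.const_mul k)
  refine hi1 (tendsto_nhds_unique (tendsto_const_nhds.congr' ?_) hlim)
  filter_upwards [eventually_ge_atTop 0] with t ht
  exact (hpos t ht).symm
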